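/- arXiv:0908.2771 — 3 statements merged into one kernel-verified Lean document; each statement's English description precedes it below -/
import Mathlib

section
/- Let V be a real vector space of dimension n ≥ 3 equipped with a Lorentzian inner product η (signature (-,+,...,+)), and let K be a symmetric bilinear form on V such that K(U,U) = 0 for every null vector U (i.e. every U with η(U,U)=0). Then K is proportional to η: there exists a real number λ with K = λ·η. -/
/-! In a Minkowski basis `e₀, …, eₙ`, the null vectors `e₀ ± eᵢ` force `K(e₀, eᵢ) = 0` and
`K(eᵢ, eᵢ) = -K(e₀, e₀)`; for distinct spacelike `eᵢ, eⱼ` the null vector `5e₀ + 3eᵢ + 4eⱼ`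
(from `3² + 4² = 5²`) then forces `K(eᵢ, eⱼ) = 0`. Hence `K = -K(e₀, e₀) • η` on the basis. -/

/-- The Minkowski inner-product values in an orthonormal-type basis indexed by `Fin n`:
`-1` on the first (timelike) direction, `+1` on the others, `0` off-diagonal. -/
noncomputable def minkowskiEntry (n : ℕ) (i j : Fin n) : ℝ :=
  if i = j then (if (i : ℕ) = 0 then -1 else 1) else 0

section MinkowskiEntry

variable {n : ℕ}

@[simp]
theorem minkowskiEntry_zero_zero : minkowskiEntry (n + 1) 0 0 = -1 := by
  simp [minkowskiEntry]

theorem minkowskiEntry_self_of_ne_zero {i : Fin n} (hi : (i : ℕ) ≠ 0) :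
    minkowskiEntry n i i = 1 := by
  simp [minkowskiEntry, hi]

theorem minkowskiEntry_of_ne {i j : Fin n} (hij : i ≠ j) : minkowskiEntry n i j = 0 := by
  simp [minkowskiEntry, hij]

end MinkowskiEntry

namespace LinearMap.BilinForm

variable {V : Type*} [AddCommGroup V] [Module ℝ V] {η K : LinearMap.BilinForm ℝ V}

def VanishesOnNullCone (η K : LinearMap.BilinForm ℝ V) : Prop :=
  ∀ U : V, η U U = 0 → K U U = 0

theorem VanishesOnNullCone.apply_eq_zero_and_add_eq_zero (hnull : VanishesOnNullCone η K)
    (hK : K.IsSymm) {e f : V} (hef : η e f = 0) (hfe : η f e = 0) (hsum : η e e + η f f = 0) :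
    K e f = 0 ∧ K e e + K f f = 0 := by
  have hplus : K (e + f) (e + f) = 0 := hnull _ <| by
    simp only [map_add, LinearMap.add_apply, hef, hfe]; linarith
  have hminus : K (e - f) (e - f) = 0 := hnull _ <| by
    simp only [map_sub, LinearMap.sub_apply, hef, hfe]; linarith
  simp only [map_add, map_sub, LinearMap.add_apply, LinearMap.sub_apply, isSymm_def.mp hK f e]
    at hplus hminus
  constructor <;> linarith

section MinkowskiBasis

variable {n : ℕ} {b : Module.Basis (Fin (n + 1)) ℝ V}
  (hb : ∀ i j, η (b i) (b j) = minkowskiEntry (n + 1) i j)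
  (hK : K.IsSymm) (hnull : VanishesOnNullCone η K)
include hb hK hnull

theorem VanishesOnNullCone.apply_timelike_spacelike {i : Fin (n + 1)} (hi : i ≠ 0) :
    K (b 0) (b i) = 0 ∧ K (b i) (b i) = -K (b 0) (b 0) := by
  have hi' : (i : ℕ) ≠ 0 := Fin.val_ne_iff.mpr hi
  obtain ⟨hoff, hdiag⟩ := hnull.apply_eq_zero_and_add_eq_zero hK
    (by rw [hb, minkowskiEntry_of_ne hi.symm]) (by rw [hb, minkowskiEntry_of_ne hi])
    (by rw [hb, hb, minkowskiEntry_zero_zero, minkowskiEntry_self_of_ne_zero hi']; norm_num)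
  exact ⟨hoff, by linarith⟩

theorem VanishesOnNullCone.apply_spacelike_spacelike {i j : Fin (n + 1)} (hi : i ≠ 0)
    (hj : j ≠ 0) (hij : i ≠ j) : K (b i) (b j) = 0 := by
  have hi' : (i : ℕ) ≠ 0 := Fin.val_ne_iff.mpr hi
  have hj' : (j : ℕ) ≠ 0 := Fin.val_ne_iff.mpr hj
  have hU := hnull ((5 : ℝ) • b 0 + (3 : ℝ) • b i + (4 : ℝ) • b j) <| by
    simp only [map_add, map_smul, LinearMap.add_apply, LinearMap.smul_apply, smul_eq_mul, hb,
      minkowskiEntry_zero_zero, minkowskiEntry_self_of_ne_zero hi',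
      minkowskiEntry_self_of_ne_zero hj', minkowskiEntry_of_ne hi, minkowskiEntry_of_ne hj,
      minkowskiEntry_of_ne hi.symm, minkowskiEntry_of_ne hj.symm, minkowskiEntry_of_ne hij,
      minkowskiEntry_of_ne hij.symm]
    norm_num
  have hsymm := isSymm_def.mp hK
  obtain ⟨hi0, hii⟩ := hnull.apply_timelike_spacelike hb hK hi
  obtain ⟨hj0, hjj⟩ := hnull.apply_timelike_spacelike hb hK hj
  simp only [map_add, map_smul, LinearMap.add_apply, LinearMap.smul_apply, smul_eq_mul,
    hsymm (b i) (b 0), hsymm (b j) (b 0), hsymm (b j) (b i), hi0, hj0, hii, hjj] at hU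
  linarith

theorem VanishesOnNullCone.eq_smul : K = (-K (b 0) (b 0)) • η := by
  refine ext_basis b fun i j => ?_
  rw [LinearMap.smul_apply, LinearMap.smul_apply, hb, smul_eq_mul]
  rcases eq_or_ne i 0 with rfl | hi <;> rcases eq_or_ne j 0 with rfl | hj
  · simp
  · simp [minkowskiEntry_of_ne hj.symm, (hnull.apply_timelike_spacelike hb hK hj).1]
  · simp [minkowskiEntry_of_ne hi, isSymm_def.mp hK (b i),
      (hnull.apply_timelike_spacelike hb hK hi).1]
  rcases eq_or_ne i j with rfl | hij
  · simp [minkowskiEntry_self_of_ne_zero (Fin.val_ne_iff.mpr hi),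
      (hnull.apply_timelike_spacelike hb hK hi).2]
  · simp [minkowskiEntry_of_ne hij, hnull.apply_spacelike_spacelike hb hK hi hj hij]

end MinkowskiBasis

end LinearMap.BilinForm

theorem symm_bilin_vanishing_on_null_cone_proportional_general
    {V : Type*} [AddCommGroup V] [Module ℝ V]
    {n : ℕ}
    (η K : LinearMap.BilinForm ℝ V)
    (hKsymm : K.IsSymm)
    (hLorentz : ∃ b : Module.Basis (Fin n) ℝ V, ∀ i j, η (b i) (b j) = minkowskiEntry n i j)
    (hnull : ∀ U : V, η U U = 0 → K U U = 0) :
    ∃ lam : ℝ, K = lam • η := by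
  obtain ⟨b, hb⟩ := hLorentz
  cases n with
  | zero => exact ⟨0, LinearMap.BilinForm.ext_basis b fun i => i.elim0⟩
  | succ n => exact ⟨_, LinearMap.BilinForm.VanishesOnNullCone.eq_smul hb hKsymm hnull⟩

/-- A symmetric bilinear form vanishing on the null cone of a Lorentzian inner product
(dimension `n ≥ 3`) is proportional to it. -/
theorem symm_bilin_vanishing_on_null_cone_proportional
    {V : Type*} [AddCommGroup V] [Module ℝ V] [FiniteDimensional ℝ V]
    {n : ℕ} (hn : 3 ≤ n) (hdim : Module.finrank ℝ V = n)
    (η K : LinearMap.BilinForm ℝ V)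
    (hηsymm : η.IsSymm) (hKsymm : K.IsSymm)
    (hLorentz : ∃ b : Module.Basis (Fin n) ℝ V, ∀ i j, η (b i) (b j) = minkowskiEntry n i j)
    (hnull : ∀ U : V, η U U = 0 → K U U = 0) :
    ∃ lam : ℝ, K = lam • η :=
  symm_bilin_vanishing_on_null_cone_proportional_general η K hKsymm hLorentz hnull
end

section
/- Let Φ be a symmetric 3×3 real matrix with trace φ, and define the 4-index array C_{ijkl} = 2(δ_{il}Φ_{jk} - δ_{ik}Φ_{jl} - δ_{jl}Φ_{ik} + δ_{jk}Φ_{il}) - φ(δ_{il}δ_{jk} - δ_{ik}δ_{jl}). Suppose there exists a nonzero vector z ∈ ℝ³ such that C_{isjk} z_s - Φ_{ij} z_k + Φ_{ik} z_j = 0 for all i,j,k. Then the eigenvalues of Φ are exactly -φ, φ, φ (with multiplicity). -/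
/-!
Contracting the condition on `z` over `i = k` gives `zᵀ Φ = -φ zᵀ`. Feeding this back in, the
condition says exactly that `M = Φ - φ I` satisfies `M_{ik} z_j = M_{ij} z_k`, so `M = w zᵀ` has
rank at most one. Hence `Φ = φ I + w zᵀ` has eigenvalues `φ, φ, φ + w ⬝ z`, and the trace
condition `tr Φ = φ` forces `w ⬝ z = -2φ`.
-/

open Polynomial

noncomputable def kron (i j : Fin 3) : ℝ := if i = j then 1 else 0

namespace Matrix

theorem exists_eq_vecMulVec_of_forall_mul_eq {K m n : Type*} [Field K] (M : Matrix m n K)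
    {z : n → K} (hz : z ≠ 0) (h : ∀ i j k, M i k * z j = M i j * z k) :
    ∃ w, M = vecMulVec w z := by
  obtain ⟨l, hl⟩ := Function.ne_iff.mp hz
  refine ⟨fun i => M i l / z l, ext fun i j => ?_⟩
  rw [vecMulVec_apply, div_mul_eq_mul_div, eq_div_iff hl, h]

variable {R n : Type*} [CommRing R] [Fintype n] [DecidableEq n]

theorem charpoly_eq_comp_sub_scalar (M : Matrix n n R) (μ : R) :
    M.charpoly = (M - scalar n μ).charpoly.comp (X - C μ) := by
  rw [charpoly_sub_scalar, comp_assoc]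
  simp

theorem charpoly_eq_of_sub_scalar_eq_vecMulVec {M : Matrix n n R} {μ : R} {w z : n → R}
    (h : M - scalar n μ = vecMulVec w z) :
    M.charpoly = (X - C μ) ^ Fintype.card n - C (w ⬝ᵥ z) * (X - C μ) ^ (Fintype.card n - 1) := by
  rw [charpoly_eq_comp_sub_scalar M μ, h, charpoly_vecMulVec]
  simp [smul_eq_C_mul]

theorem trace_eq_of_sub_scalar_eq_vecMulVec {M : Matrix n n R} {μ : R} {w z : n → R}
    (h : M - scalar n μ = vecMulVec w z) :
    M.trace = Fintype.card n * μ + w ⬝ᵥ z := by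
  rw [← trace_vecMulVec, ← h]
  simp

end Matrix

open Matrix

theorem sum_kron_mul (j : Fin 3) (f : Fin 3 → ℝ) : ∑ s, kron s j * f s = f j := by
  simp [kron]

theorem scalar_apply_eq_mul_kron (φ : ℝ) (i j : Fin 3) : scalar (Fin 3) φ i j = φ * kron i j := by
  simp [kron, diagonal_apply]

noncomputable def boostWeightZeroWeyl (Φ : Matrix (Fin 3) (Fin 3) ℝ) (φ : ℝ)
    (i j k l : Fin 3) : ℝ :=
  2 * (kron i l * Φ j k - kron i k * Φ j l - kron j l * Φ i k + kron j k * Φ i l)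
    - φ * (kron i l * kron j k - kron i k * kron j l)

section
variable {Φ : Matrix (Fin 3) (Fin 3) ℝ} {φ : ℝ} {z : Fin 3 → ℝ}

theorem sum_boostWeightZeroWeyl_mul (i j k : Fin 3) :
    ∑ s, boostWeightZeroWeyl Φ φ i s j k * z s = 2 * (kron i k * (z ᵥ* Φ) j
      - kron i j * (z ᵥ* Φ) k - Φ i j * z k + Φ i k * z j) - φ * (kron i k * z j - kron i j * z k) := by
  have expand : ∀ s, boostWeightZeroWeyl Φ φ i s j k * z s =
      2 * (kron i k * (z s * Φ s j) - kron i j * (z s * Φ s k)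
        - Φ i j * (kron s k * z s) + Φ i k * (kron s j * z s))
      - φ * (kron i k * (kron s j * z s) - kron i j * (kron s k * z s)) := by
    intro s
    rw [boostWeightZeroWeyl]
    ring
  simp only [expand, Finset.sum_sub_distrib, Finset.sum_add_distrib, ← Finset.mul_sum,
    sum_kron_mul]
  rfl

theorem vecMul_eq_neg_smul_of_weyl_kernel (hφ : Φ.trace = φ)
    (hker : ∀ i j k, (∑ s, boostWeightZeroWeyl Φ φ i s j k * z s) - Φ i j * z k + Φ i k * z j = 0) :
    z ᵥ* Φ = -φ • z := by
  funext j
  have h := Finset.sum_eq_zero fun i (_ : i ∈ Finset.univ) => hker i j i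
  have hkk : ∀ i, kron i i = 1 := fun i => if_pos rfl
  have hu : ∑ i, Φ i j * z i = (z ᵥ* Φ) j := by simp only [vecMul, dotProduct, mul_comm]
  have htr : ∑ i, Φ i i = φ := hφ
  simp only [sum_boostWeightZeroWeyl_mul, hkk, mul_sub, Finset.sum_sub_distrib,
    Finset.sum_add_distrib, ← Finset.sum_mul, ← Finset.mul_sum, sum_kron_mul, hu, htr,
    Finset.sum_const, Finset.card_univ, Fintype.card_fin, nsmul_eq_mul] at h
  rw [Pi.smul_apply, smul_eq_mul]
  linear_combination h

theorem sub_scalar_apply_mul_eq_of_weyl_kernel (hφ : Φ.trace = φ)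
    (hker : ∀ i j k, (∑ s, boostWeightZeroWeyl Φ φ i s j k * z s) - Φ i j * z k + Φ i k * z j = 0)
    (i j k : Fin 3) :
    (Φ - scalar (Fin 3) φ) i k * z j = (Φ - scalar (Fin 3) φ) i j * z k := by
  have hu := vecMul_eq_neg_smul_of_weyl_kernel hφ hker
  have h := hker i j k
  rw [sum_boostWeightZeroWeyl_mul, hu] at h
  simp only [Matrix.sub_apply, scalar_apply_eq_mul_kron, Pi.smul_apply, smul_eq_mul] at h ⊢
  linear_combination h / 3

end

theorem eigenvalues_of_5d_nongeodesic_WAND_general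
    (Φ : Matrix (Fin 3) (Fin 3) ℝ)
    (φ : ℝ) (hφ : Φ.trace = φ)
    (C : Fin 3 → Fin 3 → Fin 3 → Fin 3 → ℝ)
    (hC : ∀ i j k l, C i j k l =
      2 * (kron i l * Φ j k - kron i k * Φ j l - kron j l * Φ i k + kron j k * Φ i l)
        - φ * (kron i l * kron j k - kron i k * kron j l))
    (z : Fin 3 → ℝ) (hz : z ≠ 0)
    (hker : ∀ i j k, (∑ s, C i s j k * z s) - Φ i j * z k + Φ i k * z j = 0) :
    Φ.charpoly = (X + Polynomial.C φ) * (X - Polynomial.C φ) ^ 2 := by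
  obtain rfl : C = boostWeightZeroWeyl Φ φ := by
    funext i j k l
    exact hC i j k l
  obtain ⟨w, hw⟩ := (Φ - scalar (Fin 3) φ).exists_eq_vecMulVec_of_forall_mul_eq hz
    (sub_scalar_apply_mul_eq_of_weyl_kernel hφ hker)
  have hwz : w ⬝ᵥ z = -2 * φ := by
    have htr := trace_eq_of_sub_scalar_eq_vecMulVec hw
    rw [hφ, Fintype.card_fin, Nat.cast_ofNat] at htr
    linarith
  rw [charpoly_eq_of_sub_scalar_eq_vecMulVec hw, hwz, Fintype.card_fin]
  simp only [map_mul, map_neg, map_ofNat]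
  ring

/-- In five spacetime dimensions the boost-weight-zero Weyl components are
`C_{ijkl} = 2(δ_{il}Φ_{jk} - δ_{ik}Φ_{jl} - δ_{jl}Φ_{ik} + δ_{jk}Φ_{il}) - φ(δ_{il}δ_{jk} - δ_{ik}δ_{jl})`.
If a nonzero `z` satisfies `C_{isjk} z_s - Φ_{ij} z_k + Φ_{ik} z_j = 0`, then the
eigenvalues of `Φ` are exactly `-φ, φ, φ` (with multiplicity), i.e. the characteristic
polynomial of `Φ` is `(X + φ)(X - φ)²`. -/
theorem eigenvalues_of_5d_nongeodesic_WAND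
    (Φ : Matrix (Fin 3) (Fin 3) ℝ) (hΦ : Φ.IsSymm)
    (φ : ℝ) (hφ : Φ.trace = φ)
    (C : Fin 3 → Fin 3 → Fin 3 → Fin 3 → ℝ)
    (hC : ∀ i j k l, C i j k l =
      2 * (kron i l * Φ j k - kron i k * Φ j l - kron j l * Φ i k + kron j k * Φ i l)
        - φ * (kron i l * kron j k - kron i k * kron j l))
    (z : Fin 3 → ℝ) (hz : z ≠ 0)
    (hker : ∀ i j k, (∑ s, C i s j k * z s) - Φ i j * z k + Φ i k * z j = 0) :
    Φ.charpoly = (X + Polynomial.C φ) * (X - Polynomial.C φ) ^ 2 :=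
  eigenvalues_of_5d_nongeodesic_WAND_general Φ φ hφ C hC z hz hker
end

section
/- Let Φ be an n×n real symmetric matrix, φ = tr(Φ), and C a 4-index array with Riemann symmetries, such that the kernel K = {z ∈ ℝⁿ : C_{iljk}z_l - Φ_{ij}z_k + Φ_{ik}z_j = 0 for all i,j,k} is nontrivial. Then every z ∈ K satisfies Φz = -φz; in particular K is contained in the (-φ)-eigenspace of Φ, and K is a linear subspace of ℝⁿ. -/
/-!
Contracting the defining equation `C_{iljk} z_l - Φ_{ij} z_k + Φ_{ik} z_j = 0` over `i = j`
turns the Riemann part into `-2 (Φ z)_k` (the trace identity, after moving the contracted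
indices into the traced slots by the two antisymmetries), the second term into `-(tr Φ) z_k`
and the third into `(Φ z)_k`, so `Φ z = -(tr Φ) z`. Linearity holds because `K` is the
kernel of a linear map.
-/

open Finset Matrix

variable {ι R : Type*} [Fintype ι] [CommRing R]

theorem sum_apply_fst_thd_eq {C : ι → ι → ι → ι → R} {Φ : Matrix ι ι R}
    (hanti1 : ∀ i j k l, C i j k l = - C j i k l)
    (hanti2 : ∀ i j k l, C i j k l = - C i j l k)
    (htrace : ∀ i j, ∑ k, C i k j k = -2 * Φ i j) (l k : ι) :
    ∑ i, C i l i k = -2 * Φ l k := by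
  rw [← htrace l k]
  refine sum_congr rfl fun i _ => ?_
  rw [hanti1, hanti2, neg_neg]

/-- The map `z ↦ C_{iljk} z_l - Φ_{ij} z_k + Φ_{ik} z_j`, whose kernel is `K`. -/
def nullRotationMap (Φ : Matrix ι ι R) (C : ι → ι → ι → ι → R) :
    (ι → R) →ₗ[R] (ι → ι → ι → R) where
  toFun z i j k := (∑ l, C i l j k * z l) - Φ i j * z k + Φ i k * z j
  map_add' a b := by
    ext i j k
    simp only [Pi.add_apply, mul_add, sum_add_distrib]
    ring
  map_smul' c a := by
    ext i j k
    simp only [Pi.smul_apply, smul_eq_mul, RingHom.id_apply, mul_left_comm _ c, ← mul_sum]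
    ring

theorem mem_ker_nullRotationMap {Φ : Matrix ι ι R} {C : ι → ι → ι → ι → R} {z : ι → R} :
    z ∈ LinearMap.ker (nullRotationMap Φ C) ↔
      ∀ i j k, (∑ l, C i l j k * z l) - Φ i j * z k + Φ i k * z j = 0 := by
  simp only [LinearMap.mem_ker, funext_iff, Pi.zero_apply]
  rfl

theorem transpose_mulVec_eq_neg_trace_smul_of_mem_ker {Φ : Matrix ι ι R}
    {C : ι → ι → ι → ι → R}
    (hanti1 : ∀ i j k l, C i j k l = - C j i k l)
    (hanti2 : ∀ i j k l, C i j k l = - C i j l k)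
    (htrace : ∀ i j, ∑ k, C i k j k = -2 * Φ i j)
    {z : ι → R} (hz : z ∈ LinearMap.ker (nullRotationMap Φ C)) :
    Φᵀ *ᵥ z = -Φ.trace • z := by
  ext k
  have hcontract : ∑ i, ((∑ l, C i l i k * z l) - Φ i i * z k + Φ i k * z i) = 0 :=
    sum_eq_zero fun i _ => mem_ker_nullRotationMap.mp hz i i k
  have hriemann : ∑ i, ∑ l, C i l i k * z l = -2 * (Φᵀ *ᵥ z) k := by
    simp only [sum_comm (γ := ι), ← sum_mul, sum_apply_fst_thd_eq hanti1 hanti2 htrace,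
      mulVec, dotProduct, transpose_apply, mul_sum, mul_assoc]
  have hphi : ∑ i, Φ i k * z i = (Φᵀ *ᵥ z) k := rfl
  rw [sum_add_distrib, sum_sub_distrib, hriemann, hphi, ← sum_mul] at hcontract
  simp only [Pi.smul_apply, smul_eq_mul, trace, diag_apply]
  linear_combination -hcontract

open Finset in
theorem kernel_is_subspace_of_eigenspace_general
    {n : ℕ} (Φ : Matrix (Fin n) (Fin n) ℝ) (hΦ : Φ.IsSymm)
    (C : Fin n → Fin n → Fin n → Fin n → ℝ)
    (hanti1 : ∀ i j k l, C i j k l = - C j i k l)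
    (hanti2 : ∀ i j k l, C i j k l = - C i j l k)
    (htrace : ∀ i j, ∑ k, C i k j k = -2 * Φ i j)
    (K : Set (Fin n → ℝ))
    (hK : K = {z | ∀ i j k, (∑ l, C i l j k * z l) - Φ i j * z k + Φ i k * z j = 0}) :
    (∀ z ∈ K, Φ.mulVec z = (- Φ.trace) • z) ∧
    (∃ W : Submodule ℝ (Fin n → ℝ), (W : Set (Fin n → ℝ)) = K) := by
  have hK' : K = LinearMap.ker (nullRotationMap Φ C) :=
    hK.trans (Set.ext fun _ => mem_ker_nullRotationMap.symm)
  subst hK'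
  refine ⟨fun z hz => ?_, _, rfl⟩
  have h := transpose_mulVec_eq_neg_trace_smul_of_mem_ker hanti1 hanti2 htrace hz
  rwa [hΦ.eq] at h

open Finset in
/-- The kernel of the map `z ↦ C_{iljk}z_l - Φ_{ij}z_k + Φ_{ik}z_j`, for `C` with
Riemann symmetries and trace `C_{ikjk} = -2Φ_{ij}`, is a linear subspace contained in
the `(-tr Φ)`-eigenspace of `Φ`. -/
theorem kernel_is_subspace_of_eigenspace
    {n : ℕ} (Φ : Matrix (Fin n) (Fin n) ℝ) (hΦ : Φ.IsSymm)
    (C : Fin n → Fin n → Fin n → Fin n → ℝ)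
    (hanti1 : ∀ i j k l, C i j k l = - C j i k l)
    (hanti2 : ∀ i j k l, C i j k l = - C i j l k)
    (hpair : ∀ i j k l, C i j k l = C k l i j)
    (hbianchi : ∀ i j k l, C i j k l + C i k l j + C i l j k = 0)
    (htrace : ∀ i j, ∑ k, C i k j k = -2 * Φ i j)
    (K : Set (Fin n → ℝ))
    (hK : K = {z | ∀ i j k, (∑ l, C i l j k * z l) - Φ i j * z k + Φ i k * z j = 0})
    (hnontriv : ∃ z ∈ K, z ≠ 0) :
    (∀ z ∈ K, Φ.mulVec z = (- Φ.trace) • z) ∧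
    (∃ W : Submodule ℝ (Fin n → ℝ), (W : Set (Fin n → ℝ)) = K) :=
  kernel_is_subspace_of_eigenspace_general Φ hΦ C hanti1 hanti2 htrace K hK
end
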